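/- arXiv:2107.08162 — 2 statements merged into one kernel-verified Lean document; each statement's English description precedes it below -/
import Mathlib

section
/- Let f : 𝕆 → 𝕆 be left para-linear. If Re f(x) = 0 for all x ∈ 𝕆, then f = 0. Consequently, two left para-linear maps with equal real parts coincide. -/
noncomputable section

open Quaternion

/-- The octonions, as the Cayley–Dickson double of the quaternions. -/
def Octo : Type := ℍ × ℍ

namespace Octo

instance : AddCommGroup Octo := inferInstanceAs (AddCommGroup (ℍ × ℍ))
instance : Module ℝ Octo := inferInstanceAs (Module ℝ (ℍ × ℍ))

/-- Cayley–Dickson multiplication: (a,b)(c,d) = (ac − d̄b, da + bc̄). -/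
instance : Mul Octo :=
  ⟨fun x y => ((x.1 * y.1 - star y.2 * x.2, y.2 * x.1 + x.2 * star y.1) : ℍ × ℍ)⟩

/-- Octonionic conjugation. -/
def conj (x : Octo) : Octo := ((star x.1, -x.2) : ℍ × ℍ)

/-- Real part. -/
def re (x : Octo) : ℝ := x.1.re

/-- Squared norm. -/
def normSq (x : Octo) : ℝ := re (x * conj x)

/-- The standard basis e₀ = 1, e₁, …, e₇. -/
def e : Fin 8 → Octo :=
  ![((1, 0) : ℍ × ℍ), ((⟨0,1,0,0⟩, 0) : ℍ × ℍ), ((⟨0,0,1,0⟩, 0) : ℍ × ℍ),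
    ((⟨0,0,0,1⟩, 0) : ℍ × ℍ), ((0, 1) : ℍ × ℍ), ((0, ⟨0,1,0,0⟩) : ℍ × ℍ),
    ((0, ⟨0,0,1,0⟩) : ℍ × ℍ), ((0, ⟨0,0,0,1⟩) : ℍ × ℍ)]

/-- Inverse: p⁻¹ = conj p / |p|². -/
def inv (x : Octo) : Octo := (normSq x)⁻¹ • conj x

/-- The associator [a,b,c] = (ab)c − a(bc). -/
def assoc (a b c : Octo) : Octo := a * b * c - a * (b * c)

/-- Left para-linear map: ℝ-linear with Re(f(px) − p f(x)) = 0. -/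
def IsParaLinear (f : Octo → Octo) : Prop :=
  IsLinearMap ℝ f ∧ ∀ p x : Octo, re (f (p * x) - p * f x) = 0

end Octo


namespace Octo

lemma re_sub' (x y : Octo) : re (x - y) = re x - re y := rfl

lemma conj_mul_self_re (y : Octo) :
    re (conj y * y) = Quaternion.normSq y.1 + Quaternion.normSq y.2 := by
  show ((star y.1) * y.1 - star y.2 * (-y.2)).re = _
  rw [mul_neg, sub_neg_eq_add, Quaternion.star_mul_self, Quaternion.star_mul_self]
  simp

lemma mul_sub' (p a b : Octo) : p * (a - b) = p * a - p * b := by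
  apply Prod.ext
  · show p.1 * (a.1 - b.1) - star (a.2 - b.2) * p.2 =
      (p.1 * a.1 - star a.2 * p.2) - (p.1 * b.1 - star b.2 * p.2)
    rw [star_sub]; noncomm_ring
  · show (a.2 - b.2) * p.1 + p.2 * star (a.1 - b.1) =
      (a.2 * p.1 + p.2 * star a.1) - (b.2 * p.1 + p.2 * star b.1)
    rw [star_sub]; noncomm_ring

lemma key (h : Octo → Octo) (hh : IsParaLinear h) (hre : ∀ x, re (h x) = 0) :
    h = 0 := by
  funext x
  have h1 := hh.2 (conj (h x)) x
  rw [re_sub', hre, zero_sub, neg_eq_zero, conj_mul_self_re] at h1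
  have h2 : Quaternion.normSq (h x).1 = 0 ∧ Quaternion.normSq (h x).2 = 0 := by
    constructor <;> nlinarith [Quaternion.normSq_nonneg (a := (h x).1),
      Quaternion.normSq_nonneg (a := (h x).2)]
  have e1 : (h x).1 = 0 := by
    have := h2.1; rwa [Quaternion.normSq_eq_zero] at this
  have e2 : (h x).2 = 0 := by
    have := h2.2; rwa [Quaternion.normSq_eq_zero] at this
  show h x = (0 : ℍ × ℍ)
  exact Prod.ext e1 e2

end Octo

theorem stmt11 (f g : Octo → Octo) (hf : Octo.IsParaLinear f)
    (hg : Octo.IsParaLinear g) :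
    ((∀ x, Octo.re (f x) = 0) → f = 0) ∧
      ((∀ x, Octo.re (f x) = Octo.re (g x)) → f = g) := by
  refine ⟨Octo.key f hf, ?_⟩
  intro hre
  have hfg : Octo.IsParaLinear (f - g) := by
    refine ⟨?_, ?_⟩
    · constructor
      · intro a b; simp [hf.1.map_add, hg.1.map_add]; abel
      · intro c a; simp [hf.1.map_smul, hg.1.map_smul, smul_sub]
    · intro p x
      have h1 := hf.2 p x
      have h2 := hg.2 p x
      have : (f - g) (p * x) - p * (f - g) x =
          (f (p * x) - p * f x) - (g (p * x) - p * g x) := by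
        simp [Octo.mul_sub']; abel
      rw [this, Octo.re_sub', h1, h2, sub_zero]
  have := Octo.key (f - g) hfg (fun x => by
    simp [Octo.re_sub', hre x])
  funext x
  have := congrFun this x
  simp only [Pi.sub_apply, Pi.zero_apply, sub_eq_zero] at this
  exact this
end
end

section
/- Let f : 𝕆 → 𝕆 be left para-linear and define its second associator [p,x,f] := f(px) − p f(x). Then p·[p,x,f] = [p,x,f]·conj(p) and p·[p,x,f] = [p, conj(p)·x, f] for all p, x ∈ 𝕆. -/
/-!
Left multiplication by `p` satisfies `p (p̄ y) = |p|² y` and `p (p y) = 2 Re(p) · p y − |p|² y`,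
so ℝ-linearity of `f` turns `p · [p,x,f]` into `[p, p̄ x, f]`. Thus `a = [p,x,f]` and `p a` are both
second associators, hence purely imaginary, and conjugating `p a` gives
`p a = −conj(p a) = −conj(a) · conj(p) = a · conj(p)`.
-/

noncomputable section

open Quaternion

namespace Octo

@[simp] lemma fst_mul (x y : Octo) : (x * y).1 = x.1 * y.1 - star y.2 * x.2 := rfl
@[simp] lemma snd_mul (x y : Octo) : (x * y).2 = y.2 * x.1 + x.2 * star y.1 := rfl
@[simp] lemma fst_add (x y : Octo) : (x + y).1 = x.1 + y.1 := rfl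
@[simp] lemma snd_add (x y : Octo) : (x + y).2 = x.2 + y.2 := rfl
@[simp] lemma fst_sub (x y : Octo) : (x - y).1 = x.1 - y.1 := rfl
@[simp] lemma snd_sub (x y : Octo) : (x - y).2 = x.2 - y.2 := rfl
@[simp] lemma fst_zero : (0 : Octo).1 = 0 := rfl
@[simp] lemma snd_zero : (0 : Octo).2 = 0 := rfl
@[simp] lemma fst_smul (r : ℝ) (x : Octo) : (r • x).1 = r • x.1 := rfl
@[simp] lemma snd_smul (r : ℝ) (x : Octo) : (r • x).2 = r • x.2 := rfl
@[simp] lemma fst_conj (x : Octo) : (conj x).1 = star x.1 := rfl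
@[simp] lemma snd_conj (x : Octo) : (conj x).2 = -x.2 := rfl

lemma ext {x y : Octo} (h₁ : x.1 = y.1) (h₂ : x.2 = y.2) : x = y := Prod.ext h₁ h₂

instance : NonUnitalNonAssocRing Octo :=
  { (inferInstance : AddCommGroup Octo) with
    mul := (· * ·)
    left_distrib := fun a b c => ext (by simp only [fst_mul, fst_add, snd_add, star_add]; noncomm_ring)
      (by simp only [snd_mul, fst_add, snd_add, star_add]; noncomm_ring)
    right_distrib := fun a b c => ext (by simp only [fst_mul, fst_add, snd_add]; noncomm_ring)
      (by simp only [snd_mul, fst_add, snd_add]; noncomm_ring)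
    zero_mul := fun a => ext (by simp) (by simp)
    mul_zero := fun a => ext (by simp) (by simp) }

instance : SMulCommClass ℝ Octo Octo :=
  ⟨fun r a b => ext (by simp [smul_sub]) (by simp [smul_add])⟩

lemma conj_conj (x : Octo) : conj (conj x) = x := ext (star_star _) (neg_neg _)

lemma conj_mul (x y : Octo) : conj (x * y) = conj y * conj x :=
  ext (by simp [star_sub]) (by simp)

lemma conj_eq_neg_of_re_eq_zero {x : Octo} (hx : re x = 0) : conj x = -x :=
  ext (Quaternion.star_eq_neg.2 hx) rfl

lemma conj_mul_eq (p x : Octo) : conj p * x = (2 * re p) • x - p * x := by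
  have hsum : star p.1 + p.1 = ((2 * re p : ℝ) : ℍ) := p.1.star_add_self'
  have hsum' : p.1 + star p.1 = ((2 * re p : ℝ) : ℍ) := p.1.self_add_star'
  refine ext ?_ ?_
  · rw [fst_sub, fst_smul, ← Quaternion.coe_mul_eq_smul, ← hsum]
    simp only [fst_mul, fst_conj, snd_conj]; noncomm_ring
  · rw [snd_sub, snd_smul, ← Quaternion.mul_coe_eq_smul, ← hsum']
    simp only [snd_mul, fst_conj, snd_conj]; noncomm_ring

lemma normSq_eq (p : Octo) : normSq p = Quaternion.normSq p.1 + Quaternion.normSq p.2 := by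
  simp [normSq, re, Quaternion.self_mul_star, Quaternion.star_mul_self]

lemma normSq_conj (p : Octo) : normSq (conj p) = normSq p := by
  simp [normSq_eq]

lemma conj_mul_mul_self (p x : Octo) : conj p * (p * x) = normSq p • x := by
  refine ext ?_ ?_
  · calc (conj p * (p * x)).1 = star p.1 * p.1 * x.1 + x.1 * (star p.2 * p.2) := by
          simp only [fst_mul, snd_mul, fst_conj, snd_conj, star_add, star_mul, star_star]
          noncomm_ring
      _ = (normSq p • x).1 := by
          simp [normSq_eq, Quaternion.star_mul_self, Quaternion.coe_mul_eq_smul,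
            Quaternion.mul_coe_eq_smul, add_smul]
  · calc (conj p * (p * x)).2 = x.2 * (p.1 * star p.1) + p.2 * star p.2 * x.2 := by
          simp only [fst_mul, snd_mul, fst_conj, snd_conj, star_sub, star_mul, star_star]
          noncomm_ring
      _ = (normSq p • x).2 := by
          simp [normSq_eq, Quaternion.self_mul_star, Quaternion.coe_mul_eq_smul,
            Quaternion.mul_coe_eq_smul, add_smul]

lemma mul_conj_mul_self (p x : Octo) : p * (conj p * x) = normSq p • x := by
  simpa [conj_conj, normSq_conj] using conj_mul_mul_self (conj p) x

lemma mul_mul_self_eq (p x : Octo) : p * (p * x) = (2 * re p) • (p * x) - normSq p • x := by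
  rw [← conj_mul_mul_self, conj_mul_eq, sub_sub_cancel]

lemma mul_eq_mul_conj_of_re_eq_zero {q a : Octo} (ha : re a = 0) (hqa : re (q * a) = 0) :
    q * a = a * conj q := by
  have := conj_mul q a
  rw [conj_eq_neg_of_re_eq_zero ha, conj_eq_neg_of_re_eq_zero hqa, neg_mul] at this
  exact neg_inj.1 this

def secondAssoc (f : Octo → Octo) (p x : Octo) : Octo := f (p * x) - p * f x

lemma mul_secondAssoc_of_isLinearMap {f : Octo → Octo} (hf : IsLinearMap ℝ f) (p x : Octo) :
    p * secondAssoc f p x = secondAssoc f p (conj p * x) := by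
  have hconj : f (conj p * x) = (2 * re p) • f x - f (p * x) := by
    rw [conj_mul_eq, hf.map_sub, hf.map_smul]
  simp only [secondAssoc, mul_conj_mul_self, hf.map_smul, hconj, mul_sub, mul_smul_comm,
    mul_mul_self_eq]
  abel

end Octo

theorem stmt13 (f : Octo → Octo) (hf : Octo.IsParaLinear f) (p x : Octo) :
    p * (f (p * x) - p * f x) = (f (p * x) - p * f x) * Octo.conj p ∧
      p * (f (p * x) - p * f x)
        = f (p * (Octo.conj p * x)) - p * f (Octo.conj p * x) := by
  have hshift : p * Octo.secondAssoc f p x = Octo.secondAssoc f p (Octo.conj p * x) :=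
    Octo.mul_secondAssoc_of_isLinearMap hf.1 p x
  have hre : Octo.re (p * Octo.secondAssoc f p x) = 0 := hshift ▸ hf.2 p (Octo.conj p * x)
  exact ⟨Octo.mul_eq_mul_conj_of_re_eq_zero (hf.2 p x) hre, hshift⟩
end
end
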